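/- (Necessity of the Pick condition) Let λ₁,…,λₙ be points in the unit disc and μ₁,…,μₙ complex numbers. If there exists H ∈ H^∞ with ‖H‖_{H^∞} ≤ 1 and H(λ_j) = μ_j for all j, then the Pick matrix [ (1 - conj(μ_i)μ_j) / (1 - λ_j·conj(λ_i)) ]_{i,j=1}^n is positive semidefinite. -/

import Mathlib

open Metric
open scoped ComplexOrder

/-!
The Szegő kernel `k_a z = (1 - conj a * z)⁻¹` reproduces values on the unit circle: by Cauchy's
formula, `∫ conj (k_a) * F = 2π F a` for `F` holomorphic on the disc and continuous up to the
boundary. For `g = ∑ conj xᵢ k_{λᵢ}` and `h = ∑ conj (xᵢ μᵢ) k_{λᵢ}` (so `h = M_H^* g`) the Pick form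
`x^* P x` is `(‖g‖² - ‖h‖²) / 2π`, with L² norms on the circle, and `⟪g, H h⟫ = ‖h‖²`. Since
`|H| ≤ 1` on the circle, `0 ≤ ‖H h - g‖² ≤ ‖h‖² - 2 ‖h‖² + ‖g‖²`, hence `‖h‖ ≤ ‖g‖`. For `H` only
holomorphic on the open disc, apply this to `z ↦ H (r z)` and let `r → 1`.
-/

open Complex ComplexConjugate Filter Topology Real Matrix

noncomputable def szegoKernel (a z : ℂ) : ℂ := (1 - conj a * z)⁻¹

noncomputable def szegoKernelSum {ι : Type*} [Fintype ι] (lam c : ι → ℂ) (z : ℂ) : ℂ :=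
  ∑ j, conj (c j) * szegoKernel (lam j) z

-- `2π` times the `H²` inner product of the boundary values, conjugate-linear on the left.
noncomputable def circlePairing (f g : ℂ → ℂ) : ℂ :=
  ∫ t in (0)..(2 * π), conj (f (circleMap 0 1 t)) * g (circleMap 0 1 t)

noncomputable def circleEnergy (f : ℂ → ℂ) : ℝ :=
  ∫ t in (0)..(2 * π), ‖f (circleMap 0 1 t)‖ ^ 2

noncomputable def pickMatrix {ι : Type*} (lam mu : ι → ℂ) : Matrix ι ι ℂ :=
  Matrix.of fun i j => (1 - conj (mu i) * mu j) / (1 - lam j * conj (lam i))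

lemma mul_mem_ball_of_mem_closedBall {r z : ℂ} (hr : ‖r‖ < 1) (hz : z ∈ closedBall 0 1) :
    r * z ∈ ball 0 1 := by
  rw [mem_closedBall_zero_iff] at hz
  rw [mem_ball_zero_iff, norm_mul]
  nlinarith [norm_nonneg r, norm_nonneg z]

lemma DifferentiableOn.diffContOnCl_comp_mul {H : ℂ → ℂ} (hH : DifferentiableOn ℂ H (ball 0 1))
    {r : ℂ} (hr : ‖r‖ < 1) : DiffContOnCl ℂ (fun z => H (r * z)) (ball 0 1) :=
  (hH.comp ((differentiableOn_const r).mul differentiableOn_id)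
    fun _ hz => mul_mem_ball_of_mem_closedBall hr hz).diffContOnCl_ball subset_rfl

lemma ContinuousOn.continuous_comp_circleMap {f : ℂ → ℂ} (hf : ContinuousOn f (sphere 0 1)) :
    Continuous fun t => f (circleMap 0 1 t) :=
  hf.comp_continuous (continuous_circleMap 0 1) (circleMap_mem_sphere 0 zero_le_one)

lemma DiffContOnCl.continuousOn_sphere {f : ℂ → ℂ} (hf : DiffContOnCl ℂ f (ball 0 1)) :
    ContinuousOn f (sphere 0 1) :=
  hf.continuousOn.mono (closure_ball (0 : ℂ) one_ne_zero ▸ sphere_subset_closedBall)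

lemma one_sub_conj_mul_ne_zero {a z : ℂ} (ha : ‖a‖ < 1) (hz : ‖z‖ ≤ 1) :
    1 - conj a * z ≠ 0 := by
  refine sub_ne_zero.2 fun h => ?_
  have : ‖conj a * z‖ < 1 := by
    rw [norm_mul, RCLike.norm_conj]
    nlinarith [norm_nonneg a, norm_nonneg z]
  simp [← h] at this

lemma differentiableOn_szegoKernel {a : ℂ} (ha : ‖a‖ < 1) :
    DifferentiableOn ℂ (szegoKernel a) (closedBall 0 1) :=
  ((differentiableOn_const _).sub ((differentiableOn_const _).mul differentiableOn_id)).inv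
    fun _ hz => one_sub_conj_mul_ne_zero ha (mem_closedBall_zero_iff.1 hz)

lemma conj_szegoKernel_of_norm_eq_one (a : ℂ) {z : ℂ} (hz : ‖z‖ = 1) :
    conj (szegoKernel a z) = z / (z - a) := by
  have hz0 : z ≠ 0 := norm_ne_zero_iff.1 (hz.trans_ne one_ne_zero)
  rw [szegoKernel, map_inv₀, map_sub, map_one, map_mul, conj_conj, ← inv_eq_conj hz, ← inv_div]
  congr 1
  field_simp

lemma circlePairing_szegoKernel {a : ℂ} (ha : ‖a‖ < 1) {F : ℂ → ℂ}
    (hF : DiffContOnCl ℂ F (ball 0 1)) : circlePairing (szegoKernel a) F = 2 * π * F a := by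
  have cauchy := hF.circleIntegral_sub_inv_smul (mem_ball_zero_iff.2 ha)
  have hintegrand : ∀ t : ℝ,
      deriv (circleMap 0 1) t • (circleMap 0 1 t - a)⁻¹ • F (circleMap 0 1 t) =
        I * (conj (szegoKernel a (circleMap 0 1 t)) * F (circleMap 0 1 t)) := fun t => by
    rw [conj_szegoKernel_of_norm_eq_one a (by simp), deriv_circleMap, smul_eq_mul, smul_eq_mul]
    ring
  rw [circleIntegral, intervalIntegral.integral_congr fun t _ => hintegrand t,
    intervalIntegral.integral_const_mul, smul_eq_mul] at cauchy
  exact mul_left_cancel₀ I_ne_zero (cauchy.trans (by ring))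

lemma circlePairing_self (f : ℂ → ℂ) : circlePairing f f = circleEnergy f := by
  simp only [circlePairing, circleEnergy, conj_mul', ← intervalIntegral.integral_ofReal]
  push_cast
  rfl

lemma norm_mul_sub_sq_le {a : ℂ} (ha : ‖a‖ ≤ 1) (b c : ℂ) :
    ‖a * b - c‖ ^ 2 ≤ ‖b‖ ^ 2 - 2 * re (conj c * (a * b)) + ‖c‖ ^ 2 := by
  have hcontract : ‖a * b‖ ^ 2 ≤ ‖b‖ ^ 2 := by
    rw [norm_mul, mul_pow]
    exact mul_le_of_le_one_left (by positivity) (pow_le_one₀ (norm_nonneg a) ha)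
  have hre : re (c * conj (a * b)) = re (conj c * (a * b)) := by
    rw [← conj_re, map_mul, conj_conj]
  rw [@norm_sub_sq ℂ ℂ, RCLike.inner_apply, RCLike.re_to_complex, hre]
  linarith

lemma circleEnergy_le_of_circlePairing_mul_eq {H g h : ℂ → ℂ}
    (hH : ∀ z ∈ sphere (0 : ℂ) 1, ‖H z‖ ≤ 1) (hHc : ContinuousOn H (sphere 0 1))
    (hgc : ContinuousOn g (sphere 0 1)) (hhc : ContinuousOn h (sphere 0 1))
    (hgh : circlePairing g (fun z => H z * h z) = circleEnergy h) :
    circleEnergy h ≤ circleEnergy g := by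
  have cH := hHc.continuous_comp_circleMap
  have cg := hgc.continuous_comp_circleMap
  have ch := hhc.continuous_comp_circleMap
  have cpair : Continuous fun t => conj (g (circleMap 0 1 t)) *
      (H (circleMap 0 1 t) * h (circleMap 0 1 t)) := (continuous_conj.comp cg).mul (cH.mul ch)
  have cnormh : Continuous fun t => ‖h (circleMap 0 1 t)‖ ^ 2 := ch.norm.pow 2
  have cnormg : Continuous fun t => ‖g (circleMap 0 1 t)‖ ^ 2 := cg.norm.pow 2
  have ccross : Continuous fun t => 2 *
      re (conj (g (circleMap 0 1 t)) * (H (circleMap 0 1 t) * h (circleMap 0 1 t))) :=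
    continuous_const.mul (continuous_re.comp cpair)
  have hre : ∫ t in (0)..(2 * π),
      re (conj (g (circleMap 0 1 t)) * (H (circleMap 0 1 t) * h (circleMap 0 1 t))) =
      re (circlePairing g fun z => H z * h z) := by
    simpa only [circlePairing, RCLike.re_to_complex] using
      intervalIntegral.intervalIntegral_re (cpair.intervalIntegrable 0 (2 * π))
  have h2π : (0 : ℝ) ≤ 2 * π := by positivity
  have hexpand := calc
    0 ≤ ∫ t in (0)..(2 * π),
        ‖H (circleMap 0 1 t) * h (circleMap 0 1 t) - g (circleMap 0 1 t)‖ ^ 2 :=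
      intervalIntegral.integral_nonneg h2π fun t _ => by positivity
    _ ≤ ∫ t in (0)..(2 * π), (‖h (circleMap 0 1 t)‖ ^ 2 -
          2 * re (conj (g (circleMap 0 1 t)) * (H (circleMap 0 1 t) * h (circleMap 0 1 t))) +
          ‖g (circleMap 0 1 t)‖ ^ 2) := by
      refine intervalIntegral.integral_mono_on h2π
        ((((cH.mul ch).sub cg).norm.pow 2).intervalIntegrable _ _)
        (((cnormh.fun_sub ccross).fun_add cnormg).intervalIntegrable _ _) fun t _ => ?_
      exact norm_mul_sub_sq_le (hH _ (circleMap_mem_sphere 0 zero_le_one t)) _ _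
    _ = circleEnergy h - 2 * re (circlePairing g fun z => H z * h z) + circleEnergy g := by
      rw [intervalIntegral.integral_add ((cnormh.fun_sub ccross).intervalIntegrable _ _)
          (cnormg.intervalIntegrable _ _),
        intervalIntegral.integral_sub (cnormh.intervalIntegrable _ _)
          (ccross.intervalIntegrable _ _),
        intervalIntegral.integral_const_mul, hre]
      rfl
  rw [hgh, ofReal_re] at hexpand
  linarith

lemma pickMatrix_isHermitian {ι : Type*} (lam mu : ι → ℂ) : (pickMatrix lam mu).IsHermitian := by
  ext i j
  simp only [pickMatrix, conjTranspose_apply, of_apply, RCLike.star_def, map_div₀, map_sub,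
    map_one, map_mul, conj_conj]
  ring

section

variable {ι : Type*} [Fintype ι]

lemma diffContOnCl_szegoKernelSum {lam : ι → ℂ} (hlam : ∀ i, ‖lam i‖ < 1) (c : ι → ℂ) :
    DiffContOnCl ℂ (szegoKernelSum lam c) (ball 0 1) :=
  (DifferentiableOn.fun_sum fun j _ =>
    (differentiableOn_szegoKernel (hlam j)).const_mul _).diffContOnCl_ball subset_rfl

lemma circlePairing_szegoKernelSum {lam : ι → ℂ} (hlam : ∀ i, ‖lam i‖ < 1) (c : ι → ℂ)
    {F : ℂ → ℂ} (hF : DiffContOnCl ℂ F (ball 0 1)) :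
    circlePairing (szegoKernelSum lam c) F = 2 * π * ∑ j, c j * F (lam j) := by
  have hcont : ∀ j, Continuous fun t => conj (szegoKernel (lam j) (circleMap 0 1 t)) *
      F (circleMap 0 1 t) := fun j =>
    (continuous_conj.comp ((differentiableOn_szegoKernel (hlam j)).diffContOnCl_ball
      subset_rfl).continuousOn_sphere.continuous_comp_circleMap).mul
      hF.continuousOn_sphere.continuous_comp_circleMap
  simp only [circlePairing, szegoKernelSum, map_sum, map_mul, conj_conj, Finset.sum_mul,
    Finset.mul_sum, mul_assoc]
  rw [intervalIntegral.integral_finsetSum fun j _ =>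
    ((hcont j).const_mul (c j)).intervalIntegrable _ _]
  refine Finset.sum_congr rfl fun j _ => ?_
  rw [intervalIntegral.integral_const_mul, ← circlePairing, circlePairing_szegoKernel (hlam j) hF]
  ring

lemma star_dotProduct_pickMatrix_mulVec (lam mu x : ι → ℂ) :
    star x ⬝ᵥ (pickMatrix lam mu *ᵥ x) =
      ∑ j, x j * szegoKernelSum lam x (lam j) -
        ∑ j, x j * mu j * szegoKernelSum lam (fun i => x i * mu i) (lam j) := by
  simp only [dotProduct, mulVec, pickMatrix, szegoKernelSum, szegoKernel, of_apply,
    Pi.star_apply, RCLike.star_def, map_mul, Finset.mul_sum, ← Finset.sum_sub_distrib]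
  rw [Finset.sum_comm]
  refine Finset.sum_congr rfl fun i _ => Finset.sum_congr rfl fun j _ => ?_
  ring

lemma pickMatrix_dotProduct_mulVec_nonneg_of_diffContOnCl {H : ℂ → ℂ}
    (hH : DiffContOnCl ℂ H (ball 0 1)) (hH1 : ∀ z ∈ sphere (0 : ℂ) 1, ‖H z‖ ≤ 1) {lam : ι → ℂ}
    (hlam : ∀ i, ‖lam i‖ < 1) (x : ι → ℂ) :
    0 ≤ star x ⬝ᵥ (pickMatrix lam (fun i => H (lam i)) *ᵥ x) := by
  set g := szegoKernelSum lam x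
  set h := szegoKernelSum lam fun i => x i * H (lam i)
  have hg : DiffContOnCl ℂ g (ball 0 1) := diffContOnCl_szegoKernelSum hlam _
  have hh : DiffContOnCl ℂ h (ball 0 1) := diffContOnCl_szegoKernelSum hlam _
  have hgg := circlePairing_szegoKernelSum hlam x hg
  have hhh := circlePairing_szegoKernelSum hlam (fun i => x i * H (lam i)) hh
  have hgHh : circlePairing g (fun z => H z * h z) = circlePairing h h := by
    rw [circlePairing_szegoKernelSum hlam x (F := fun z => H z * h z) (hH.smul hh), hhh]
    simp only [mul_assoc]
  have hle : circleEnergy h ≤ circleEnergy g :=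
    circleEnergy_le_of_circlePairing_mul_eq hH1 hH.continuousOn_sphere hg.continuousOn_sphere
      hh.continuousOn_sphere (hgHh.trans (circlePairing_self h))
  have hform : star x ⬝ᵥ (pickMatrix lam (fun i => H (lam i)) *ᵥ x) =
      ((circleEnergy g - circleEnergy h) / (2 * π) : ℝ) := by
    rw [star_dotProduct_pickMatrix_mulVec, ofReal_div, ofReal_sub, ← circlePairing_self,
      ← circlePairing_self, hgg, hhh, ← mul_sub, ofReal_mul, ofReal_ofNat,
      mul_div_cancel_left₀ _ (by simp [pi_ne_zero])]
  rw [hform]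
  exact zero_le_real.2 (div_nonneg (sub_nonneg.2 hle) (by positivity))

lemma pickMatrix_dotProduct_mulVec_nonneg {H : ℂ → ℂ} (hH : DifferentiableOn ℂ H (ball 0 1))
    (hH1 : ∀ z ∈ ball (0 : ℂ) 1, ‖H z‖ ≤ 1) {lam : ι → ℂ} (hlam : ∀ i, ‖lam i‖ < 1)
    (x : ι → ℂ) : 0 ≤ star x ⬝ᵥ (pickMatrix lam (fun i => H (lam i)) *ᵥ x) := by
  have hdilate : ∀ r ∈ Set.Ioo (0 : ℝ) 1,
      0 ≤ star x ⬝ᵥ (pickMatrix lam (fun i => H (r * lam i)) *ᵥ x) := fun r hr => by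
    have hr1 : ‖(r : ℂ)‖ < 1 := by simpa [abs_of_pos hr.1] using hr.2
    exact pickMatrix_dotProduct_mulVec_nonneg_of_diffContOnCl (H := fun z => H (r * z))
      (hH.diffContOnCl_comp_mul hr1)
      (fun z hz => hH1 _ (mul_mem_ball_of_mem_closedBall hr1 (sphere_subset_closedBall hz)))
      hlam x
  have hform : Continuous fun mu : ι → ℂ => star x ⬝ᵥ (pickMatrix lam mu *ᵥ x) :=
    continuous_const.dotProduct ((continuous_matrix fun i j => by
      simp only [pickMatrix, of_apply]; fun_prop).matrix_mulVec continuous_const)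
  have hlim : Tendsto (fun r : ℝ => fun i => H (r * lam i)) (𝓝[<] 1) (𝓝 fun i => H (lam i)) := by
    refine tendsto_pi_nhds.2 fun i => ?_
    have hHi : ContinuousAt H (lam i) :=
      hH.continuousOn.continuousAt (isOpen_ball.mem_nhds (mem_ball_zero_iff.2 (hlam i)))
    refine hHi.tendsto.comp (Tendsto.mono_left ?_ nhdsWithin_le_nhds)
    simpa using (by fun_prop : Continuous fun r : ℝ => (r : ℂ) * lam i).tendsto 1
  exact ge_of_tendsto (hform.continuousAt.tendsto.comp hlim)
    (eventually_of_mem (Ioo_mem_nhdsLT one_pos) hdilate)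

end

/-- necessity of the Pick condition: if `H ∈ H^∞` with
`‖H‖_{H^∞} ≤ 1` interpolates `H(λ j) = μ j` at points `λ j` of the unit disc,
then the Pick matrix `[(1 - conj(μ i) μ j)/(1 - λ j conj(λ i))]` is positive
semidefinite. -/
theorem stmt_18 (n : ℕ) (lam mu : Fin n → ℂ) (hlam : ∀ i, ‖lam i‖ < 1)
    (H : ℂ → ℂ) (hH : DifferentiableOn ℂ H (ball (0 : ℂ) 1))
    (hH1 : ∀ z ∈ ball (0 : ℂ) 1, ‖H z‖ ≤ 1)
    (hint : ∀ j, H (lam j) = mu j) :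
    (Matrix.of fun i j : Fin n =>
      (1 - starRingEnd ℂ (mu i) * mu j) /
        (1 - lam j * starRingEnd ℂ (lam i))).PosSemidef := by
  obtain rfl : mu = fun j => H (lam j) := funext fun j => (hint j).symm
  exact .of_dotProduct_mulVec_nonneg (pickMatrix_isHermitian lam _)
    (pickMatrix_dotProduct_mulVec_nonneg hH hH1 hlam)
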